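/- arXiv:1812.06781 — 3 statements merged into one kernel-verified Lean document; each statement's English description precedes it below -/
import Mathlib

section
/- Let G be a topological group acting continuously on topological spaces X' and X, and let f : X' → X be a continuous G-equivariant map (so f(g • p) = g • f(p) for all g ∈ G and p ∈ X'). If X is G-locally retractile, then f is a locally trivial fibration; concretely, every point x ∈ X admits an open neighbourhood U and a homeomorphism e : f⁻¹({x}) × U → f⁻¹(U) such that f(e(p,u)) = u for all p ∈ f⁻¹({x}) and u ∈ U. -/
/-! A local retraction `r : U → G` around `x` moves the fibre over `x` onto every other fibre
over `U`: equivariance gives `f (r u • p) = r u • x = u`. Hence `(p, u) ↦ r u • p` is a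
homeomorphism `f ⁻¹' {x} × U ≃ₜ f ⁻¹' U` over `U`, with inverse `q ↦ (r (f q)⁻¹ • q, f q)`. -/

section LocalRetraction

variable {G X X' : Type*} [Group G] [MulAction G X] [MulAction G X']
  {f : X' → X} {x : X} {U : Set X} {r : X → G}

theorem apply_smul_of_mem_fiber (hequiv : ∀ (g : G) (p : X'), f (g • p) = g • f p)
    (hr : ∀ u ∈ U, r u • x = u) (p : f ⁻¹' {x}) (u : U) : f (r u • (p : X')) = u := by
  rw [hequiv, show f p = x from p.2, hr u u.2]

theorem apply_inv_smul_of_mem_preimage (hequiv : ∀ (g : G) (p : X'), f (g • p) = g • f p)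
    (hr : ∀ u ∈ U, r u • x = u) (q : f ⁻¹' U) : f ((r (f q))⁻¹ • (q : X')) = x := by
  rw [hequiv, inv_smul_eq_iff, hr _ q.2]

variable [TopologicalSpace G] [ContinuousInv G] [TopologicalSpace X] [TopologicalSpace X']
  [ContinuousSMul G X']

def fiberProdHomeomorphOfRetraction (hf : Continuous f)
    (hequiv : ∀ (g : G) (p : X'), f (g • p) = g • f p) (hrc : ContinuousOn r U)
    (hr : ∀ u ∈ U, r u • x = u) : f ⁻¹' {x} × U ≃ₜ f ⁻¹' U where
  toFun pu := ⟨r pu.2 • (pu.1 : X'), by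
    rw [Set.mem_preimage, apply_smul_of_mem_fiber hequiv hr]; exact pu.2.2⟩
  invFun q := (⟨(r (f q))⁻¹ • (q : X'), apply_inv_smul_of_mem_preimage hequiv hr q⟩, ⟨f q, q.2⟩)
  left_inv := by
    rintro ⟨p, u⟩
    ext <;> simp only [apply_smul_of_mem_fiber hequiv hr, inv_smul_smul]
  right_inv q := Subtype.ext (smul_inv_smul _ _)
  continuous_toFun := by
    have hru : Continuous fun pu : f ⁻¹' {x} × U => r pu.2 :=
      hrc.comp_continuous continuous_subtype_val.snd' fun pu => pu.2.2
    exact (hru.smul (continuous_subtype_val.comp continuous_fst)).subtype_mk _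
  continuous_invFun := by
    have hfq : Continuous fun q : f ⁻¹' U => f q := hf.comp continuous_subtype_val
    have hrq : Continuous fun q : f ⁻¹' U => r (f q) := hrc.comp_continuous hfq fun q => q.2
    exact ((hrq.inv.smul continuous_subtype_val).subtype_mk _).prodMk (hfq.subtype_mk _)

theorem apply_fiberProdHomeomorphOfRetraction (hf : Continuous f)
    (hequiv : ∀ (g : G) (p : X'), f (g • p) = g • f p) (hrc : ContinuousOn r U)
    (hr : ∀ u ∈ U, r u • x = u) (p : f ⁻¹' {x}) (u : U) :
    f (fiberProdHomeomorphOfRetraction hf hequiv hrc hr (p, u)) = u :=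
  apply_smul_of_mem_fiber hequiv hr p u

end LocalRetraction

theorem equivariant_map_to_locally_retractile_is_locally_trivial_fibration_general
    {G X X' : Type*} [Group G] [TopologicalSpace G] [IsTopologicalGroup G]
    [TopologicalSpace X] [TopologicalSpace X'] [MulAction G X] [MulAction G X']
    [ContinuousSMul G X']
    (f : X' → X) (hf : Continuous f)
    (hequiv : ∀ (g : G) (p : X'), f (g • p) = g • f p)
    (hretr : ∀ x : X, ∃ U : Set X, IsOpen U ∧ x ∈ U ∧
      ∃ r : X → G, ContinuousOn r U ∧ r x = 1 ∧ ∀ x' ∈ U, r x' • x = x') :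
    ∀ x : X, ∃ U : Set X, IsOpen U ∧ x ∈ U ∧
      ∃ e : ↥(f ⁻¹' {x}) × ↥U ≃ₜ ↥(f ⁻¹' U),
        ∀ (p : ↥(f ⁻¹' {x})) (u : ↥U), f ((e (p, u) : X')) = (u : X) := by
  intro x
  obtain ⟨U, hU, hxU, r, hrc, -, hr⟩ := hretr x
  exact ⟨U, hU, hxU, fiberProdHomeomorphOfRetraction hf hequiv hrc hr,
    apply_fiberProdHomeomorphOfRetraction hf hequiv hrc hr⟩

/-- If `X` is `G`-locally retractile and `f : X' → X` is a continuous
`G`-equivariant map, then `f` is a locally trivial fibration: every point `x : X` has an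
open neighbourhood `U` and a homeomorphism `f ⁻¹' {x} × U ≃ₜ f ⁻¹' U` over `U`. -/
theorem equivariant_map_to_locally_retractile_is_locally_trivial_fibration
    {G X X' : Type*} [Group G] [TopologicalSpace G] [IsTopologicalGroup G]
    [TopologicalSpace X] [TopologicalSpace X'] [MulAction G X] [MulAction G X']
    [ContinuousSMul G X] [ContinuousSMul G X']
    (f : X' → X) (hf : Continuous f)
    (hequiv : ∀ (g : G) (p : X'), f (g • p) = g • f p)
    (hretr : ∀ x : X, ∃ U : Set X, IsOpen U ∧ x ∈ U ∧
      ∃ r : X → G, ContinuousOn r U ∧ r x = 1 ∧ ∀ x' ∈ U, r x' • x = x') :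
    ∀ x : X, ∃ U : Set X, IsOpen U ∧ x ∈ U ∧
      ∃ e : ↥(f ⁻¹' {x}) × ↥U ≃ₜ ↥(f ⁻¹' U),
        ∀ (p : ↥(f ⁻¹' {x})) (u : ↥U), f ((e (p, u) : X')) = (u : X) :=
  equivariant_map_to_locally_retractile_is_locally_trivial_fibration_general f hf hequiv hretr
end

section
/- Let X be a metric space and A ⊆ X a closed subset possessing a closed neighbourhood N (that is, N is closed and A is contained in the interior of N) such that A is a strong deformation retract of N: there is a continuous map Φ : N × [0,1] → N with Φ(x,0) = x for all x ∈ N, Φ(x,1) ∈ A for all x ∈ N, and Φ(a,t) = a for all a ∈ A and t ∈ [0,1]. Then X × {0} ∪ A × [0,1] is a strong deformation retract of X × [0,1]: there is a continuous map Ψ : (X × [0,1]) × [0,1] → X × [0,1] with Ψ(z,0) = z for all z, Ψ(z,1) ∈ X × {0} ∪ A × [0,1] for all z, and Ψ(z,t) = z for all z ∈ X × {0} ∪ A × [0,1] and all t ∈ [0,1]. -/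
open unitInterval

/-!
The pair `(X, A)` is an NDR pair in Steenrod's sense: there are `u : X → [0, ∞)` with zero set
exactly `A` and a deformation `h` of `X` fixing `A` that moves `{u < 1}` into `A` at time `1`.
In a perfectly normal space, `u` is a function with zero set `A` plus twice a Urysohn function
`f` separating `A` from `(interior N)ᶜ`, and `h (x, t) = Φ (x, t v x)` on `N` and `x` off `N`,
with the cutoff `v = clamp (2 - 2 f)` vanishing off `interior N` and equal to `1` on `{u < 1}`. From `(u, h)` the cylinder deforms by
`Ψ ((x, s), t) = (h (x, t s / u x), s - t min s (u x))`, times clamped to `[0, 1]`; this is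
continuous at points of `A` because `h` fixes `A` and `[0, 1]` is compact.
-/

open Set Topology

theorem ContinuousAt.comp_prodMk_of_const_fiber {X Y Z P : Type*} [TopologicalSpace X]
    [TopologicalSpace Y] [TopologicalSpace Z] [TopologicalSpace P] [CompactSpace Y]
    {h : X × Y → Z} (hh : Continuous h) {f : P → X} {g : P → Y} {p : P} {z : Z}
    (hf : ContinuousAt f p) (hz : ∀ y, h (f p, y) = z) :
    ContinuousAt (fun q => h (f q, g q)) p := by
  rw [ContinuousAt, hz]
  intro W hW
  have hnear : ∀ᶠ x in 𝓝 (f p), ∀ y ∈ univ, h (x, y) ∈ W :=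
    isCompact_univ.eventually_forall_of_forall_eventually fun y _ =>
      hh.continuousAt.eventually (by rwa [hz])
  exact (hf.eventually hnear).mono fun q hq => hq _ (mem_univ _)

section Cutoff

variable {X : Type*} {N : Set X} {Φ : N × I → X} {v : X → I}

open scoped Classical in
noncomputable def cutoffDeformation (N : Set X) (Φ : N × I → X) (v : X → I) : X × I → X :=
  fun p => if hp : p.1 ∈ N then Φ (⟨p.1, hp⟩, p.2 * v p.1) else p.1

theorem cutoffDeformation_of_mem {x : X} (hx : x ∈ N) (t : I) :
    cutoffDeformation N Φ v (x, t) = Φ (⟨x, hx⟩, t * v x) :=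
  dif_pos hx

theorem cutoffDeformation_of_notMem {x : X} (hx : x ∉ N) (t : I) :
    cutoffDeformation N Φ v (x, t) = x :=
  dif_neg hx

theorem cutoffDeformation_zero (hΦ0 : ∀ x, Φ (x, 0) = x) (x : X) :
    cutoffDeformation N Φ v (x, 0) = x := by
  by_cases hx : x ∈ N
  · rw [cutoffDeformation_of_mem hx, zero_mul, hΦ0]
  · exact cutoffDeformation_of_notMem hx 0

theorem continuous_cutoffDeformation [TopologicalSpace X] (hN : IsClosed N) (hΦ : Continuous Φ)
    (hΦ0 : ∀ x, Φ (x, 0) = x) (hv : Continuous v) (hvN : ∀ x ∉ N, v x = 0) :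
    Continuous (cutoffDeformation N Φ v) := by
  have hcover : N ×ˢ univ ∪ {x | v x = 0} ×ˢ univ = (univ : Set (X × I)) := by
    ext ⟨x, t⟩
    simpa using (em (x ∈ N)).imp_right (hvN x)
  rw [← continuousOn_univ, ← hcover]
  refine ContinuousOn.union_of_isClosed ?_ ?_ (hN.prod isClosed_univ)
    ((isClosed_eq hv continuous_const).prod isClosed_univ)
  · rw [continuousOn_iff_continuous_domRestrict]
    have : (N ×ˢ univ).domRestrict (cutoffDeformation N Φ v) = fun q =>
        Φ (⟨q.1.1, q.2.1⟩, q.1.2 * v q.1.1) := by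
      funext q
      exact cutoffDeformation_of_mem q.2.1 _
    rw [this]
    fun_prop
  · refine continuous_fst.continuousOn.congr fun ⟨x, t⟩ hx => ?_
    by_cases hxN : x ∈ N
    · rw [cutoffDeformation_of_mem hxN, show v x = 0 from hx.1, mul_zero, hΦ0]
    · exact cutoffDeformation_of_notMem hxN t

end Cutoff

structure NDRPair {X : Type*} [TopologicalSpace X] (A : Set X) where
  u : X → ℝ
  h : X × I → X
  continuous_u : Continuous u
  continuous_h : Continuous h
  u_nonneg : ∀ x, 0 ≤ u x
  u_eq_zero_iff : ∀ x, u x = 0 ↔ x ∈ A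
  h_zero : ∀ x, h (x, 0) = x
  h_of_mem : ∀ a ∈ A, ∀ t, h (a, t) = a
  h_one_mem : ∀ x, u x < 1 → h (x, 1) ∈ A

namespace NDRPair

variable {X : Type*} [TopologicalSpace X] {A : Set X}

variable (P : NDRPair A)

-- Where `u x = 0` the point `x` lies in `A`, which `h` fixes, so the junk value of `/ 0` is harmless.
noncomputable def cylinderDeformation (p : (X × I) × I) : X × I :=
  (P.h (p.1.1, projIcc 0 1 zero_le_one (p.2 * p.1.2 / P.u p.1.1)),
    projIcc 0 1 zero_le_one (p.1.2 - p.2 * min (p.1.2 : ℝ) (P.u p.1.1)))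

theorem continuous_cylinderDeformation : Continuous P.cylinderDeformation := by
  have hu := P.continuous_u
  have hh := P.continuous_h
  refine Continuous.prodMk (continuous_iff_continuousAt.2 fun ⟨⟨x, s⟩, t⟩ => ?_) (by fun_prop)
  by_cases hx : P.u x = 0
  · exact (continuous_fst.comp continuous_fst).continuousAt.comp_prodMk_of_const_fiber hh
      (P.h_of_mem x ((P.u_eq_zero_iff x).1 hx))
  · exact hh.continuousAt.comp (by fun_prop (disch := exact hx))

theorem cylinderDeformation_zero (z : X × I) : P.cylinderDeformation (z, 0) = z := by
  simp [cylinderDeformation, projIcc_val, P.h_zero]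

theorem cylinderDeformation_one_mem (z : X × I) :
    (P.cylinderDeformation (z, 1)).2 = 0 ∨ (P.cylinderDeformation (z, 1)).1 ∈ A := by
  obtain ⟨x, s⟩ := z
  simp only [cylinderDeformation, Icc.coe_one, one_mul]
  rcases le_or_gt (s : ℝ) (P.u x) with hsu | hus
  · left
    rw [min_eq_left hsu, sub_self, projIcc_left]
    rfl
  · right
    by_cases hx : P.u x = 0
    · have hxA := (P.u_eq_zero_iff x).1 hx
      rwa [P.h_of_mem x hxA]
    · have hdiv : 1 ≤ (s : ℝ) / P.u x :=
        (one_le_div ((P.u_nonneg x).lt_of_ne' hx)).2 hus.le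
      rw [projIcc_of_right_le _ hdiv]
      exact P.h_one_mem x (hus.trans_le s.2.2)

theorem cylinderDeformation_of_mem (z : X × I) (hz : z.2 = 0 ∨ z.1 ∈ A) (t : I) :
    P.cylinderDeformation (z, t) = z := by
  obtain ⟨x, s⟩ := z
  rcases hz with hs | hx
  · obtain rfl : s = 0 := hs
    simp [cylinderDeformation, P.h_zero, min_eq_left (P.u_nonneg x)]
  · simp [cylinderDeformation, P.h_of_mem x hx, (P.u_eq_zero_iff x).2 hx, min_eq_right s.2.1,
      projIcc_val]

end NDRPair

theorem NDRPair.nonempty_of_strongDeformationRetract_nhd {X : Type*} [TopologicalSpace X]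
    [PerfectlyNormalSpace X] {A N : Set X} (hA : IsClosed A) (hN : IsClosed N)
    (hAN : A ⊆ interior N) (Φ : N × I → N) (hΦ : Continuous Φ)
    (hΦ0 : ∀ x : N, Φ (x, 0) = x) (hΦ1 : ∀ x : N, (Φ (x, 1) : X) ∈ A)
    (hΦA : ∀ a : N, (a : X) ∈ A → ∀ t : I, Φ (a, t) = a) :
    Nonempty (NDRPair A) := by
  obtain ⟨g, hgA, hg⟩ :=
    perfectlyNormalSpace_iff_forall_isClosed_preimage_zero.1 ‹_› A hA
  obtain ⟨f, hfA, hfN, hf⟩ := exists_continuous_zero_one_of_isClosed hA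
    isOpen_interior.isClosed_compl (disjoint_compl_right_iff_subset.2 hAN)
  let v : X → I := fun x => projIcc 0 1 zero_le_one (2 - 2 * f x)
  have hvN : ∀ x ∉ N, v x = 0 := fun x hx => by
    simp only [v, hfN (fun h => hx (interior_subset h)), Pi.one_apply]
    norm_num
  refine ⟨{ u := fun x => g x + 2 * f x
            h := cutoffDeformation N (fun p => (Φ p : X)) v
            continuous_u := by fun_prop
            continuous_h := continuous_cutoffDeformation hN (by fun_prop)
              (fun x => congrArg Subtype.val (hΦ0 x)) (by fun_prop) hvN
            u_nonneg := fun x => by linarith [(hg x).1, (hf x).1]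
            u_eq_zero_iff := fun x => ?_
            h_zero := cutoffDeformation_zero fun x => congrArg Subtype.val (hΦ0 x)
            h_of_mem := fun a ha t => ?_
            h_one_mem := fun x hx => ?_ }⟩
  · rw [hgA, mem_preimage, mem_singleton_iff]
    constructor
    · intro hx
      linarith [(hg x).1, (hf x).1]
    · intro hx
      simp [hx, hfA ((hgA ▸ hx : x ∈ A))]
  · rw [cutoffDeformation_of_mem (interior_subset (hAN ha)), hΦA ⟨a, _⟩ ha]
  · have hfx : f x < 1 / 2 := by linarith [(hg x).1]
    have hv1 : v x = 1 := projIcc_of_right_le _ (by linarith)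
    have hxN : x ∈ N := by_contra fun hxN => one_ne_zero (hv1 ▸ hvN x hxN)
    rw [cutoffDeformation_of_mem hxN, hv1, one_mul]
    exact hΦ1 _

/-- Let `X` be a metric space, `A ⊆ X` closed with a closed neighbourhood
`N` (i.e. `A ⊆ interior N`) such that `A` is a strong deformation retract of `N`.
Then `X × {0} ∪ A × [0,1]` is a strong deformation retract of `X × [0,1]`. -/
theorem strong_deformation_retract_of_product
    {X : Type*} [MetricSpace X] (A N : Set X)
    (hA : IsClosed A) (hN : IsClosed N) (hAN : A ⊆ interior N)
    (Φ : ↥N × unitInterval → ↥N) (hΦ : Continuous Φ)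
    (hΦ0 : ∀ x : ↥N, Φ (x, 0) = x)
    (hΦ1 : ∀ x : ↥N, (Φ (x, 1) : X) ∈ A)
    (hΦA : ∀ a : ↥N, (a : X) ∈ A → ∀ t : unitInterval, Φ (a, t) = a) :
    ∃ Ψ : (X × unitInterval) × unitInterval → X × unitInterval,
      Continuous Ψ ∧
      (∀ z, Ψ (z, 0) = z) ∧
      (∀ z, (Ψ (z, 1)).2 = 0 ∨ (Ψ (z, 1)).1 ∈ A) ∧
      (∀ z : X × unitInterval, (z.2 = 0 ∨ z.1 ∈ A) → ∀ t : unitInterval, Ψ (z, t) = z) := by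
  obtain ⟨P⟩ := NDRPair.nonempty_of_strongDeformationRetract_nhd hA hN hAN Φ hΦ hΦ0 hΦ1 hΦA
  exact ⟨P.cylinderDeformation, P.continuous_cylinderDeformation, P.cylinderDeformation_zero,
    P.cylinderDeformation_one_mem, P.cylinderDeformation_of_mem⟩
end

section
/- Let V be a finite-dimensional complex inner product space, with Hermitian inner product ⟪·,·⟫ conjugate-linear in the first variable, and let ω(u,w) = Im ⟪u,w⟫ be the associated symplectic form (compatible with the complex structure J given by multiplication by i). Let V₂^{symp} = {(u,w) ∈ V × V : ω(u,w) = 1} be the space of symplectic 2-frames of V, and let S = {v ∈ V : ‖v‖ = 1} be the unit sphere, both with the subspace topology. Then the map S → V₂^{symp} sending v to (v, i·v) is well defined (since ω(v, i·v) = ‖v‖² = 1), continuous, and a homotopy equivalence. -/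
open ContinuousMap Metric unitInterval

/-!
Real rescalings `(u, w) ↦ (r • u, r⁻¹ • w)` preserve `ω(u, w) = Im ⟪u, w⟫`, and for fixed `u ≠ 0`
the `w` with `ω(u, w) = 1` form an affine hyperplane containing `i • u / ‖u‖²`. Moving `w`
linearly to `i • u / ‖u‖²` while rescaling `u` to unit length therefore deforms the frames onto
the image of `v ↦ (v, i • v)`, so normalising the first vector is a homotopy inverse of that map;
on the sphere it is even an exact left inverse.
-/

theorem one_sub_add_mul_inv_pos {t : ℝ} (ht : t ∈ I) {a : ℝ} (ha : 0 < a) :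
    0 < 1 - t + t * a⁻¹ := by
  simpa using convex_Ioi (0 : ℝ) one_pos (inv_pos.2 ha) (sub_nonneg.2 ht.2) ht.1 (by ring)

noncomputable section

variable {V : Type*} [NormedAddCommGroup V] [InnerProductSpace ℂ V]

variable (V) in
def symplecticFrames : Set (V × V) := {p | (inner ℂ p.1 p.2).im = 1}

theorem im_inner_smul_I_self (v : V) : (inner ℂ v (Complex.I • v)).im = ‖v‖ ^ 2 := by
  simp [← Complex.ofReal_pow]

theorem fst_ne_zero_of_mem_symplecticFrames {p : V × V} (hp : p ∈ symplecticFrames V) :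
    p.1 ≠ 0 := by
  intro h
  simp [symplecticFrames, h] at hp

theorem real_smul_inv_smul_mem_symplecticFrames {u w : V} (h : (u, w) ∈ symplecticFrames V)
    {r : ℝ} (hr : r ≠ 0) : (r • u, r⁻¹ • w) ∈ symplecticFrames V := by
  simpa [symplecticFrames, ← mul_assoc, hr] using h

theorem convex_setOf_mem_symplecticFrames (u : V) :
    Convex ℝ {w | (u, w) ∈ symplecticFrames V} := by
  intro w hw w' hw' a b _ _ hab
  simp_all [symplecticFrames]

theorem im_inner_real_smul_right (a : ℝ) (u w : V) :
    (inner ℂ u (a • w)).im = a * (inner ℂ u w).im := by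
  simp

theorem inv_normSq_smul_I_smul_mem_symplecticFrames {u : V} (hu : u ≠ 0) :
    (u, (‖u‖ ^ 2)⁻¹ • Complex.I • u) ∈ symplecticFrames V := by
  simp only [symplecticFrames, Set.mem_ofPred_eq]
  rw [im_inner_real_smul_right, im_inner_smul_I_self]
  simp [hu]

theorem I_smul_mem_symplecticFrames {v : V} (hv : v ∈ sphere 0 1) :
    (v, Complex.I • v) ∈ symplecticFrames V := by
  simpa [mem_sphere_zero_iff_norm.1 hv] using
    inv_normSq_smul_I_smul_mem_symplecticFrames (ne_zero_of_mem_unit_sphere ⟨v, hv⟩)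

def sphereToSymplecticFrames : C(sphere (0 : V) 1, symplecticFrames V) where
  toFun v := ⟨(v, Complex.I • (v : V)), I_smul_mem_symplecticFrames v.2⟩
  continuous_toFun := by fun_prop

def symplecticFramesToSphere : C(symplecticFrames V, sphere (0 : V) 1) where
  toFun p := ⟨‖p.1.1‖⁻¹ • p.1.1, by
    simp [norm_smul, fst_ne_zero_of_mem_symplecticFrames p.2]⟩
  continuous_toFun := by
    have := fun p : symplecticFrames V => fst_ne_zero_of_mem_symplecticFrames p.2
    fun_prop (disch := simpa)

theorem symplecticFramesToSphere_comp_sphereToSymplecticFrames :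
    symplecticFramesToSphere.comp sphereToSymplecticFrames = .id (sphere (0 : V) 1) := by
  ext v
  simp [symplecticFramesToSphere, sphereToSymplecticFrames, mem_sphere_zero_iff_norm.1 v.2]

def frameDeformation (t : ℝ) (p : V × V) : V × V :=
  ((1 - t + t * ‖p.1‖⁻¹) • p.1,
    (1 - t + t * ‖p.1‖⁻¹)⁻¹ • ((1 - t) • p.2 + t • ((‖p.1‖ ^ 2)⁻¹ • Complex.I • p.1)))

theorem frameDeformation_mem_symplecticFrames {t : ℝ} (ht : t ∈ I) {p : V × V}
    (hp : p ∈ symplecticFrames V) : frameDeformation t p ∈ symplecticFrames V := by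
  have hu := fst_ne_zero_of_mem_symplecticFrames hp
  have hr := one_sub_add_mul_inv_pos ht (norm_pos_iff.2 hu)
  refine real_smul_inv_smul_mem_symplecticFrames ?_ hr.ne'
  exact convex_setOf_mem_symplecticFrames p.1 hp (inv_normSq_smul_I_smul_mem_symplecticFrames hu)
    (sub_nonneg.2 ht.2) ht.1 (by ring)

theorem frameDeformation_zero (p : V × V) : frameDeformation 0 p = p := by
  simp [frameDeformation]

theorem frameDeformation_one {p : V × V} (hp : p.1 ≠ 0) :
    frameDeformation 1 p = (‖p.1‖⁻¹ • p.1, Complex.I • ‖p.1‖⁻¹ • p.1) := by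
  have : ‖p.1‖ ≠ 0 := norm_ne_zero_iff.2 hp
  simp only [frameDeformation, sub_self, zero_smul, zero_add, one_mul,
    inv_inv, smul_smul, smul_comm Complex.I]
  congr 2
  field_simp

theorem continuousOn_frameDeformation :
    ContinuousOn (fun x : ℝ × (V × V) => frameDeformation x.1 x.2) (I ×ˢ symplecticFrames V) := by
  intro x hx
  have := fst_ne_zero_of_mem_symplecticFrames hx.2
  have := (one_sub_add_mul_inv_pos hx.1 (norm_pos_iff.2 this)).ne'
  unfold frameDeformation
  fun_prop (disch := first | assumption | simpa)

def frameHomotopy :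
    Homotopy (ContinuousMap.id (symplecticFrames V))
      (sphereToSymplecticFrames.comp symplecticFramesToSphere) where
  toFun x := ⟨frameDeformation x.1 x.2, frameDeformation_mem_symplecticFrames x.1.2 x.2.2⟩
  continuous_toFun := by
    refine Continuous.subtype_mk (continuousOn_frameDeformation.comp_continuous
      (f := fun x : I × symplecticFrames V => ((x.1 : ℝ), (x.2 : V × V))) (by fun_prop) ?_) _
    exact fun x => ⟨x.1.2, x.2.2⟩
  map_zero_left p := Subtype.ext (frameDeformation_zero p.1)
  map_one_left p := Subtype.ext (frameDeformation_one (fst_ne_zero_of_mem_symplecticFrames p.2))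

def sphereHomotopyEquivSymplecticFrames : sphere (0 : V) 1 ≃ₕ symplecticFrames V where
  toFun := sphereToSymplecticFrames
  invFun := symplecticFramesToSphere
  left_inv := by rw [symplecticFramesToSphere_comp_sphereToSymplecticFrames]
  right_inv := ⟨frameHomotopy.symm⟩

end

theorem sphere_homotopyEquiv_symplecticFrames_general
    {V : Type*} [NormedAddCommGroup V] [InnerProductSpace ℂ V] :
    ∃ e : ContinuousMap.HomotopyEquiv
        ↥(Metric.sphere (0 : V) 1)
        ↥{p : V × V | (inner ℂ p.1 p.2 : ℂ).im = 1},
      ∀ v : ↥(Metric.sphere (0 : V) 1),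
        (e.toFun v : V × V) = ((v : V), Complex.I • (v : V)) :=
  ⟨sphereHomotopyEquivSymplecticFrames, fun _ => rfl⟩

/-- Let `V` be a finite-dimensional complex inner product space with
symplectic form `ω(u,w) = Im ⟪u,w⟫`. The map from the unit sphere
`S = {v : ‖v‖ = 1}` to the space of symplectic 2-frames
`V₂^{symp} = {(u,w) : ω(u,w) = 1}` sending `v` to `(v, i • v)` is well defined,
continuous, and a homotopy equivalence. -/
theorem sphere_homotopyEquiv_symplecticFrames
    {V : Type*} [NormedAddCommGroup V] [InnerProductSpace ℂ V] [FiniteDimensional ℂ V] :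
    ∃ e : ContinuousMap.HomotopyEquiv
        ↥(Metric.sphere (0 : V) 1)
        ↥{p : V × V | (inner ℂ p.1 p.2 : ℂ).im = 1},
      ∀ v : ↥(Metric.sphere (0 : V) 1),
        (e.toFun v : V × V) = ((v : V), Complex.I • (v : V)) :=
  sphere_homotopyEquiv_symplecticFrames_general
end
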